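/- The homomorphism φ: S_n → Aut(PVT_n) induced by the conjugation action of S_n ≤ VT_n on PVT_n is injective for every n ≥ 2. -/

import Mathlib

namespace VTG

open scoped commutatorElement

abbrev Gen (n : ℕ) := Fin (n-1) ⊕ Fin (n-1)

/-- The free-group letter corresponding to the generator `s_i`. -/
def fs {n : ℕ} (i : Fin (n-1)) : FreeGroup (Gen n) := FreeGroup.of (Sum.inl i)

/-- The free-group letter corresponding to the generator `ρ_i`. -/
def fr {n : ℕ} (i : Fin (n-1)) : FreeGroup (Gen n) := FreeGroup.of (Sum.inr i)

/-- The defining relations of the virtual twin group `VT_n`. -/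
def vtRels (n : ℕ) : Set (FreeGroup (Gen n)) :=
  { w | (∃ i : Fin (n-1), w = fs i * fs i) ∨
        (∃ i j : Fin (n-1), (i : ℕ) + 2 ≤ (j : ℕ) ∧ w = ⁅fs i, fs j⁆) ∨
        (∃ i : Fin (n-1), w = fr i * fr i) ∨
        (∃ i j : Fin (n-1), (i : ℕ) + 2 ≤ (j : ℕ) ∧ w = ⁅fr i, fr j⁆) ∨
        (∃ i j : Fin (n-1), (j : ℕ) = (i : ℕ) + 1 ∧
          w = fr i * fr j * fr i * (fr j * fr i * fr j)⁻¹) ∨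
        (∃ i j : Fin (n-1), (i : ℕ) + 2 ≤ (j : ℕ) ∧ (w = ⁅fr i, fs j⁆ ∨ w = ⁅fs i, fr j⁆)) ∨
        (∃ i j : Fin (n-1), (j : ℕ) = (i : ℕ) + 1 ∧
          w = fr i * fr j * fs i * (fs j * fr i * fr j)⁻¹) }

/-- The virtual twin group `VT_n`. -/
abbrev VT (n : ℕ) := PresentedGroup (vtRels n)

/-- The generator `s_{k+1}` (1-based numbering) of `VT_n`. -/
def sg {n : ℕ} (k : ℕ) (h : k < n - 1) : VT n := PresentedGroup.of (Sum.inl ⟨k, h⟩)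

/-- The generator `ρ_{k+1}` (1-based numbering) of `VT_n`. -/
def rg {n : ℕ} (k : ℕ) (h : k < n - 1) : VT n := PresentedGroup.of (Sum.inr ⟨k, h⟩)

/-- The transposition `(i, i+1)` in the symmetric group on `n` letters. -/
def tr {n : ℕ} (i : Fin (n - 1)) : Equiv.Perm (Fin n) :=
  Equiv.swap ⟨i.1, by have := i.2; omega⟩ ⟨i.1 + 1, by have := i.2; omega⟩

lemma swap_commute {α : Type*} [DecidableEq α] {a b c d : α}
    (h1 : a ≠ c) (h2 : a ≠ d) (h3 : b ≠ c) (h4 : b ≠ d) :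
    Commute (Equiv.swap a b) (Equiv.swap c d) := by
  apply Equiv.Perm.Disjoint.commute
  intro x
  by_cases hxa : x = a
  · subst hxa; right; exact Equiv.swap_apply_of_ne_of_ne h1 h2
  · by_cases hxb : x = b
    · subst hxb; right; exact Equiv.swap_apply_of_ne_of_ne h3 h4
    · left; exact Equiv.swap_apply_of_ne_of_ne hxa hxb

lemma tr_commute {n : ℕ} {i j : Fin (n-1)} (h : (i : ℕ) + 2 ≤ (j : ℕ)) :
    Commute (tr (n := n) i) (tr j) := by
  apply swap_commute <;>
    (intro hEq; apply_fun Fin.val at hEq; simp only [] at hEq; omega)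

lemma tr_braid {n : ℕ} {i j : Fin (n-1)} (h : (j : ℕ) = (i : ℕ) + 1) :
    tr (n := n) i * tr j * tr i = tr j * tr i * tr j := by
  have hj2 : (i : ℕ) + 2 ≤ n := by have := j.2; omega
  set a : Fin n := ⟨i.1, by omega⟩ with ha
  set b : Fin n := ⟨i.1 + 1, by omega⟩ with hb
  set c : Fin n := ⟨i.1 + 2, by omega⟩ with hc
  have hab : a ≠ b := by simp [ha, hb, Fin.ext_iff]
  have hbc : b ≠ c := by simp [hb, hc, Fin.ext_iff]
  have hac : a ≠ c := by simp [ha, hc, Fin.ext_iff]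
  have h1 : tr (n := n) i = Equiv.swap a b := rfl
  have h2 : tr (n := n) j = Equiv.swap b c := by
    unfold tr
    congr 1 <;> exact Fin.ext (by simp [hb, hc, h])
  rw [h1, h2]
  have L := Equiv.swap_mul_swap_mul_swap (x := c) (y := b) (z := a)
    (hbc.symm) (hac.symm)
  have R := Equiv.swap_mul_swap_mul_swap (x := a) (y := b) (z := c)
    (hab) (hac)
  calc Equiv.swap a b * Equiv.swap b c * Equiv.swap a b
      = Equiv.swap b a * Equiv.swap c b * Equiv.swap b a := by
        rw [Equiv.swap_comm a b, Equiv.swap_comm b c]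
    _ = Equiv.swap a c := L
    _ = Equiv.swap c a := Equiv.swap_comm a c
    _ = Equiv.swap b c * Equiv.swap a b * Equiv.swap b c := R.symm

lemma tr_sq {n : ℕ} (i : Fin (n-1)) : tr (n := n) i * tr i = 1 := Equiv.swap_mul_self _ _

/-- The canonical projection `π : VT_n → S_n`. -/
def perm (n : ℕ) : VT n →* Equiv.Perm (Fin n) :=
  PresentedGroup.toGroup (f := Sum.elim tr tr) (by
    rintro w (⟨i, rfl⟩ | ⟨i, j, hij, rfl⟩ | ⟨i, rfl⟩ | ⟨i, j, hij, rfl⟩ |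
      ⟨i, j, hij, rfl⟩ | ⟨i, j, hij, (rfl | rfl)⟩ | ⟨i, j, hij, rfl⟩)
    · simp [fs, tr_sq]
    · rw [map_commutatorElement]
      simp only [fs, FreeGroup.lift_apply_of, Sum.elim_inl]
      exact commutatorElement_eq_one_iff_commute.mpr (tr_commute hij)
    · simp [fr, tr_sq]
    · rw [map_commutatorElement]
      simp only [fr, FreeGroup.lift_apply_of, Sum.elim_inr]
      exact commutatorElement_eq_one_iff_commute.mpr (tr_commute hij)
    · have h1 : FreeGroup.lift (Sum.elim tr tr) (fr i * fr j * fr (n := n) i)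
          = tr i * tr j * tr i := by simp [fr]
      have h2 : FreeGroup.lift (Sum.elim tr tr) (fr j * fr i * fr (n := n) j)
          = tr j * tr i * tr j := by simp [fr]
      rw [map_mul, map_inv, h1, h2, tr_braid hij, mul_inv_cancel]
    · rw [map_commutatorElement]
      simp only [fr, fs, FreeGroup.lift_apply_of, Sum.elim_inl, Sum.elim_inr]
      exact commutatorElement_eq_one_iff_commute.mpr (tr_commute hij)
    · rw [map_commutatorElement]
      simp only [fr, fs, FreeGroup.lift_apply_of, Sum.elim_inl, Sum.elim_inr]
      exact commutatorElement_eq_one_iff_commute.mpr (tr_commute hij)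
    · have h1 : FreeGroup.lift (Sum.elim tr tr) (fr i * fr j * fs (n := n) i)
          = tr i * tr j * tr i := by simp [fr, fs]
      have h2 : FreeGroup.lift (Sum.elim tr tr) (fs j * fr i * fr (n := n) j)
          = tr j * tr i * tr j := by simp [fr, fs]
      rw [map_mul, map_inv, h1, h2, tr_braid hij, mul_inv_cancel])

/-!
Map `VT_n` to the wreath product `ℤ ≀ S_n = ℤⁿ ⋊ S_n` by `s_i ↦ (e_i - e_{i+1}, (i i+1))` and
`ρ_i ↦ (0, (i i+1))`; this lifts `π`, and sends `λ_{i,i+1} = s_i ρ_i ∈ PVT_n` to the translation by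
`e_i - e_{i+1}`. If `s g` centralises `PVT_n`, then `g` fixes every vector `e_i - e_{i+1}`, hence
fixes `i` and `i+1` for all `i`, so `g = 1`. Coefficients in `ℤ` rather than `ℤ/2` matter: for
`n = 2` the transposition only inverts `λ_{1,2}`.
-/

end VTG

namespace SemidirectProduct

variable {N G : Type*} [CommGroup N] [Group G] {φ : G →* MulAut N}

theorem commute_mk {a b : N} {g h : G} (hgh : Commute g h) (ha : φ h a = a) (hb : φ g b = b) :
    Commute (⟨a, g⟩ : N ⋊[φ] G) ⟨b, h⟩ := by
  ext
  · simp only [mul_left, ha, hb, mul_comm]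
  · exact hgh

theorem commute_inl_iff (x : N ⋊[φ] G) (a : N) : Commute x (inl a) ↔ φ x.right a = a := by
  simp only [Commute, SemidirectProduct.ext_iff, SemiconjBy, mul_left, mul_right, left_inl,
    right_inl, map_one, MulAut.one_apply, mul_one, one_mul, and_true]
  rw [mul_comm a, mul_left_cancel_iff]

end SemidirectProduct

lemma commute_of_conjNormal_eq_one {G : Type*} [Group G] {H : Subgroup G} [H.Normal] {x y : G}
    (hx : MulAut.conjNormal (H := H) x = 1) (hy : y ∈ H) : Commute x y := by
  have := congrArg Subtype.val (DFunLike.congr_fun hx ⟨y, hy⟩)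
  rwa [MulAut.conjNormal_apply, MulAut.one_apply, mul_inv_eq_iff_eq_mul] at this

namespace VTG

open SemidirectProduct

section Edge

variable {α : Type*} [DecidableEq α]

def edge (a b : α) : α → Multiplicative ℤ :=
  Pi.mulSingle a (.ofAdd 1) / Pi.mulSingle b (.ofAdd 1)

lemma mulAutArrow_mulSingle {M : Type*} [Monoid M] (σ : Equiv.Perm α) (a : α) (m : M) :
    mulAutArrow σ (Pi.mulSingle a m) = Pi.mulSingle (σ a) m := by
  funext k
  change (Pi.mulSingle a m : α → M) (σ⁻¹ k) = _
  simp only [Pi.mulSingle_apply, Equiv.Perm.inv_eq_iff_eq]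

lemma mulAutArrow_edge (σ : Equiv.Perm α) (a b : α) :
    mulAutArrow σ (edge a b) = edge (σ a) (σ b) := by
  simp only [edge, map_div, mulAutArrow_mulSingle]

lemma edge_swap (a b : α) : edge b a = (edge a b)⁻¹ :=
  (inv_div _ _).symm

lemma edge_injective {a b c d : α} (hab : a ≠ b) (h : edge c d = edge a b) : c = a ∧ d = b := by
  have ha := congrArg Multiplicative.toAdd (congrFun h a)
  have hb := congrArg Multiplicative.toAdd (congrFun h b)
  simp only [edge, Pi.div_apply, Pi.mulSingle_apply, if_neg hab, if_neg hab.symm] at ha hb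
  constructor <;> by_contra hne <;> split_ifs at ha hb <;> simp_all

end Edge

lemma tr_val {n : ℕ} (i : Fin (n-1)) (x : Fin n) :
    (tr i x).1 = if x.1 = i.1 then i.1 + 1 else if x.1 = i.1 + 1 then i.1 else x.1 := by
  simp only [tr, Equiv.swap_apply_def, Fin.ext_iff]
  split_ifs <;> rfl

def edgeVec {n : ℕ} (i : Fin (n-1)) : Fin n → Multiplicative ℤ :=
  edge ⟨i, by omega⟩ ⟨i + 1, by omega⟩

lemma mulAutArrow_tr_edgeVec_self {n : ℕ} (i : Fin (n-1)) :
    mulAutArrow (tr i) (edgeVec i) = (edgeVec i)⁻¹ := by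
  rw [edgeVec, mulAutArrow_edge, tr, Equiv.swap_apply_left, Equiv.swap_apply_right, edge_swap]

lemma mulAutArrow_tr_edgeVec_of_far {n : ℕ} {i j : Fin (n-1)}
    (h : (i : ℕ) + 2 ≤ j ∨ (j : ℕ) + 2 ≤ i) : mulAutArrow (tr i) (edgeVec j) = edgeVec j := by
  rw [edgeVec, mulAutArrow_edge]
  congr 1 <;> ext <;> simp only [tr_val] <;> split_ifs <;> omega

lemma mulAutArrow_tr_tr_edgeVec {n : ℕ} {i j : Fin (n-1)} (h : (j : ℕ) = i + 1) :
    mulAutArrow (tr i) (mulAutArrow (tr j) (edgeVec i)) = edgeVec j := by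
  rw [edgeVec, edgeVec, mulAutArrow_edge, mulAutArrow_edge]
  congr 1 <;> ext <;> simp only [tr_val] <;> split_ifs <;> omega

lemma eq_one_of_forall_mulAutArrow_edgeVec {n : ℕ} (hn : 2 ≤ n) {g : Equiv.Perm (Fin n)}
    (hg : ∀ i : Fin (n-1), mulAutArrow g (edgeVec i) = edgeVec i) : g = 1 := by
  have hfix (i : Fin (n-1)) :=
    edge_injective (by simp) ((mulAutArrow_edge g _ _).symm.trans (hg i))
  refine Equiv.ext fun m => ?_
  by_cases hm : m.1 < n - 1
  · exact (hfix ⟨m, hm⟩).1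
  · rw [show m = ⟨n - 2 + 1, by omega⟩ from Fin.ext (by dsimp only; omega)]
    exact (hfix ⟨n - 2, by omega⟩).2

abbrev Wreath (n : ℕ) := (Fin n → Multiplicative ℤ) ⋊[mulAutArrow] Equiv.Perm (Fin n)

def toWreathGen {n : ℕ} : Gen n → Wreath n :=
  Sum.elim (fun i => ⟨edgeVec i, tr i⟩) (fun i => inr (tr i))

lemma lift_toWreathGen_of_mem_vtRels {n : ℕ} :
    ∀ r ∈ vtRels n, FreeGroup.lift toWreathGen r = 1 := by
  rintro w (⟨i, rfl⟩ | ⟨i, j, hij, rfl⟩ | ⟨i, rfl⟩ | ⟨i, j, hij, rfl⟩ |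
      ⟨i, j, hij, rfl⟩ | ⟨i, j, hij, (rfl | rfl)⟩ | ⟨i, j, hij, rfl⟩) <;>
    simp only [fs, fr, map_mul, map_inv, map_commutatorElement, FreeGroup.lift_apply_of,
      toWreathGen, Sum.elim_inl, Sum.elim_inr, commutatorElement_eq_one_iff_commute,
      mul_inv_eq_one]
  · refine SemidirectProduct.ext ?_ (tr_sq i)
    simp [mulAutArrow_tr_edgeVec_self]
  · exact commute_mk (tr_commute hij) (mulAutArrow_tr_edgeVec_of_far (.inr hij))
      (mulAutArrow_tr_edgeVec_of_far (.inl hij))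
  · rw [← map_mul, tr_sq, map_one]
  · exact (tr_commute hij).map inr
  · simp only [← map_mul, tr_braid hij]
  · exact commute_mk (tr_commute hij) (map_one _) (mulAutArrow_tr_edgeVec_of_far (.inl hij))
  · exact commute_mk (tr_commute hij) (mulAutArrow_tr_edgeVec_of_far (.inr hij)) (map_one _)
  · refine SemidirectProduct.ext ?_ (tr_braid hij)
    simp [mulAutArrow_tr_tr_edgeVec hij]

def toWreath (n : ℕ) : VT n →* Wreath n := PresentedGroup.toGroup lift_toWreathGen_of_mem_vtRels

lemma rightHom_comp_toWreath (n : ℕ) : rightHom.comp (toWreath n) = perm n :=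
  PresentedGroup.ext fun x => by cases x <;> rfl

/-- `λ_{i,i+1} = s_i ρ_i`. -/
def lam {n : ℕ} (i : Fin (n-1)) : VT n := sg i i.2 * rg i i.2

lemma lam_mem_ker_perm {n : ℕ} (i : Fin (n-1)) : lam i ∈ (perm n).ker := by
  rw [MonoidHom.mem_ker, lam, map_mul]
  exact tr_sq i

lemma toWreath_lam {n : ℕ} (i : Fin (n-1)) : toWreath n (lam i) = inl (edgeVec i) := by
  rw [lam, map_mul]
  refine SemidirectProduct.ext ?_ (tr_sq i)
  simp [toWreath, sg, rg, toWreathGen]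

/-- The homomorphism `φ : S_n → Aut(PVT_n)` induced by the conjugation action of
`S_n ≤ VT_n` on `PVT_n = ker(π)` is injective (for any splitting `s` of `π`). -/
theorem conj_action_injective (n : ℕ) (hn : 2 ≤ n)
    (s : Equiv.Perm (Fin n) →* VT n)
    (hs : (perm n).comp s = MonoidHom.id (Equiv.Perm (Fin n))) :
    Function.Injective ⇑((MulAut.conjNormal (H := (perm n).ker)).comp s) := by
  refine (injective_iff_map_eq_one _).mpr fun g hg => ?_
  rw [MonoidHom.comp_apply] at hg
  have hright : (toWreath n (s g)).right = g := by
    rw [← rightHom_eq_right, ← MonoidHom.comp_apply, rightHom_comp_toWreath,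
      ← MonoidHom.comp_apply, hs, MonoidHom.id_apply]
  refine eq_one_of_forall_mulAutArrow_edgeVec hn fun i => ?_
  have hcomm := (commute_of_conjNormal_eq_one (H := (perm n).ker) hg (lam_mem_ker_perm i)).map
    (toWreath n)
  rwa [toWreath_lam, commute_inl_iff, hright] at hcomm

end VTG
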